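/- arXiv:math/0502575 — 5 statements merged into one kernel-verified Lean document; each statement's English description precedes it below -/
import Mathlib

section
/- Let 0 < m < n, let h ⊆ so(m) be a subalgebra (embedded in so(n) acting trivially on the last n−m coordinates), and let ψ : h → ℝ^{n−m} be a linear map vanishing on the commutant [h,h]. Then g^{4,h,m,ψ} = {(0, A, X + ψ(A)) : A ∈ h, X ∈ ℝᵐ} is a Lie subalgebra of so(1,n+1)_{ℝp}, where ℝᵐ and ℝ^{n−m} are the spans of e_1,...,e_m and e_{m+1},...,e_n respectively. -/
open Matrix

attribute [local instance 100] LieRing.ofAssociativeRing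

/-- Index type for `ℝ^{1,n+1}` with basis `p, e_1, …, e_n, q`. -/
abbrev Idx (n : ℕ) := Fin 1 ⊕ (Fin n ⊕ Fin 1)

/-- The Gram matrix `[[0,0,1],[0,E_n,0],[1,0,0]]` of the Minkowski form `η`. -/
noncomputable def eta (n : ℕ) : Matrix (Idx n) (Idx n) ℝ :=
  Matrix.fromBlocks 0 (Matrix.of fun _ j => Sum.elim (fun _ => (0 : ℝ)) (fun _ => 1) j)
    (Matrix.of fun i _ => Sum.elim (fun _ => (0 : ℝ)) (fun _ => 1) i)
    (Matrix.fromBlocks 1 0 0 0)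

/-- The matrix `[[a, X, 0], [0, A, -Xᵀ], [0, 0, -a]]` associated to the triple `(a, A, X)`. -/
noncomputable def toMat {n : ℕ} (a : ℝ) (A : Matrix (Fin n) (Fin n) ℝ) (X : Fin n → ℝ) :
    Matrix (Idx n) (Idx n) ℝ :=
  Matrix.fromBlocks (Matrix.of fun _ _ => a)
    (Matrix.of fun _ j => Sum.elim X (fun _ => (0 : ℝ)) j)
    0
    (Matrix.fromBlocks A (Matrix.of fun i _ => -X i) 0 (Matrix.of fun _ _ => -a))

/-- The first basis vector `p`. -/
noncomputable def pvec (n : ℕ) : Idx n → ℝ := Pi.single (Sum.inl 0) 1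

/-- `so(1,n+1)`: matrices skew-symmetric with respect to `η`. -/
noncomputable def soEta (n : ℕ) : Set (Matrix (Idx n) (Idx n) ℝ) :=
  {M | Mᵀ * eta n + eta n * M = 0}

/-- `so(1,n+1)_{ℝp}`: elements of `so(1,n+1)` preserving the isotropic line `ℝ p`. -/
noncomputable def stab (n : ℕ) : Set (Matrix (Idx n) (Idx n) ℝ) :=
  {M | M ∈ soEta n ∧ M.mulVec (pvec n) ∈ Submodule.span ℝ {pvec n}}

/-- `so(n)` as a Lie subalgebra of the matrix Lie algebra. -/
noncomputable def son (n : ℕ) : LieSubalgebra ℝ (Matrix (Fin n) (Fin n) ℝ) :=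
  skewAdjointMatricesLieSubalgebra (1 : Matrix (Fin n) (Fin n) ℝ)

/-!
In block form, `⁅(0, A, Z), (0, B, W)⁆ = (0, ⁅A, B⁆, A W - B Z)` for skew `A`, `B`.
With `Z = X + ψ A` and `W = Y + ψ B`: `ψ ⁅A, B⁆ = 0`, and `A (ψ B) = B (ψ A) = 0` because
`A, B` only see the first `m` coordinates while `ψ` takes values in the last `n - m`; finally
`A Y - B X ∈ ℝᵐ` since `A, B` preserve `ℝᵐ`. Every `(0, A, Z)` with `A` skew lies in
`so(1,n+1)` and kills `p`.
-/

section toMat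

variable {n : ℕ}

lemma toMat_zero : toMat (n := n) 0 0 0 = 0 := by
  ext (_ | _ | _) (_ | _ | _) <;> simp [toMat]

lemma toMat_add (a b : ℝ) (A B : Matrix (Fin n) (Fin n) ℝ) (X Y : Fin n → ℝ) :
    toMat (a + b) (A + B) (X + Y) = toMat a A X + toMat b B Y := by
  ext (_ | _ | _) (_ | _ | _) <;> simp [toMat, add_comm]

lemma toMat_smul (c a : ℝ) (A : Matrix (Fin n) (Fin n) ℝ) (X : Fin n → ℝ) :
    toMat (c * a) (c • A) (c • X) = c • toMat a A X := by
  ext (_ | _ | _) (_ | _ | _) <;> simp [toMat]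

lemma toMat_lie (a b : ℝ) {A B : Matrix (Fin n) (Fin n) ℝ} (hA : Aᵀ = -A) (hB : Bᵀ = -B)
    (X Y : Fin n → ℝ) :
    ⁅toMat a A X, toMat b B Y⁆ = toMat 0 ⁅A, B⁆ (a • Y - b • X + A *ᵥ Y - B *ᵥ X) := by
  -- skewness turns the row vector `X B` of the `p`-row into `-(B X)`
  have hskew : ∀ C : Matrix (Fin n) (Fin n) ℝ, Cᵀ = -C →
      ∀ (V : Fin n → ℝ) j, ∑ i, V i * C i j = -∑ i, C j i * V i := by
    intro C hC V j
    rw [← Finset.sum_neg_distrib]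
    refine Finset.sum_congr rfl fun i _ => ?_
    have hij : C i j = -C j i := congrFun (congrFun hC j) i
    rw [hij]; ring
  ext (_ | _ | _) (_ | _ | _) <;>
    simp [Ring.lie_def, toMat, Matrix.mul_apply, Fintype.sum_sum_type, mulVec, dotProduct,
      hskew A hA, hskew B hB] <;> first | ring1 | simp [mul_comm]

lemma toMat_mulVec_pvec (a : ℝ) (A : Matrix (Fin n) (Fin n) ℝ) (X : Fin n → ℝ) :
    toMat a A X *ᵥ pvec n = a • pvec n := by
  ext (_ | _ | _) <;>
    simp [toMat, pvec, mulVec, dotProduct, Fintype.sum_sum_type, Fin.fin_one_eq_zero]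

lemma toMat_mem_soEta (a : ℝ) {A : Matrix (Fin n) (Fin n) ℝ} (hA : Aᵀ = -A) (X : Fin n → ℝ) :
    toMat a A X ∈ soEta n := by
  ext (_ | i | _) (_ | j | _) <;>
    simp [toMat, eta, Matrix.mul_apply, Fintype.sum_sum_type, Matrix.one_apply]
  rw [← transpose_apply A, hA, neg_apply, neg_add_cancel]

lemma toMat_mem_stab (a : ℝ) {A : Matrix (Fin n) (Fin n) ℝ} (hA : Aᵀ = -A) (X : Fin n → ℝ) :
    toMat a A X ∈ stab n :=
  ⟨toMat_mem_soEta a hA X, Submodule.mem_span_singleton.2 ⟨a, (toMat_mulVec_pvec a A X).symm⟩⟩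

end toMat

lemma transpose_eq_neg_of_mem_son {n : ℕ} {A : Matrix (Fin n) (Fin n) ℝ} (hA : A ∈ son n) :
    Aᵀ = -A := by
  simpa [son, Matrix.IsSkewAdjoint, Matrix.IsAdjointPair] using hA

section mulVec

variable {n m : ℕ} {A : Matrix (Fin n) (Fin n) ℝ}

lemma mulVec_apply_eq_zero_of_row_eq_zero {i : Fin n} (hA : ∀ j, A i j = 0) (v : Fin n → ℝ) :
    (A *ᵥ v) i = 0 := by
  simp [mulVec, dotProduct, hA]

lemma mulVec_eq_zero_of_disjoint_support (hA : ∀ i j : Fin n, m ≤ (j : ℕ) → A i j = 0)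
    {v : Fin n → ℝ} (hv : ∀ i : Fin n, (i : ℕ) < m → v i = 0) : A *ᵥ v = 0 := by
  ext i
  show ∑ j, A i j * v j = 0
  refine Finset.sum_eq_zero fun j _ => ?_
  rcases lt_or_ge (j : ℕ) m with hj | hj
  · simp [hv j hj]
  · simp [hA i j hj]

end mulVec

section gFour

variable {n : ℕ} (m : ℕ) {h : LieSubalgebra ℝ (Matrix (Fin n) (Fin n) ℝ)}

/-- The paper's `g^{4,h,m,ψ}`, as a linear subspace. -/
noncomputable def gFour (ψ : h →ₗ[ℝ] (Fin n → ℝ)) : Submodule ℝ (Matrix (Idx n) (Idx n) ℝ) where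
  carrier := {M | ∃ (A : h) (X : Fin n → ℝ), (∀ i : Fin n, m ≤ (i : ℕ) → X i = 0) ∧
    M = toMat 0 (A : Matrix (Fin n) (Fin n) ℝ) (X + ψ A)}
  zero_mem' := ⟨0, 0, fun _ _ => rfl, by simp [toMat_zero]⟩
  add_mem' := by
    rintro _ _ ⟨A, X, hX, rfl⟩ ⟨B, Y, hY, rfl⟩
    refine ⟨A + B, X + Y, fun i hi => by simp [hX i hi, hY i hi], ?_⟩
    rw [AddMemClass.coe_add, map_add, add_add_add_comm, ← toMat_add, add_zero]
  smul_mem' := by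
    rintro c _ ⟨A, X, hX, rfl⟩
    refine ⟨c • A, c • X, fun i hi => by simp [hX i hi], ?_⟩
    rw [SetLike.val_smul, map_smul, ← smul_add, ← toMat_smul, mul_zero]

variable {m} {ψ : h →ₗ[ℝ] (Fin n → ℝ)}

lemma lie_mem_gFour (hh : h ≤ son n)
    (hblock : ∀ A ∈ h, ∀ i j : Fin n, m ≤ (i : ℕ) ∨ m ≤ (j : ℕ) → A i j = 0)
    (hψsupp : ∀ (A : h) (i : Fin n), (i : ℕ) < m → ψ A i = 0)
    (hψ : ∀ A B : h, ψ ⁅A, B⁆ = 0) {M N : Matrix (Idx n) (Idx n) ℝ}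
    (hM : M ∈ gFour m ψ) (hN : N ∈ gFour m ψ) : ⁅M, N⁆ ∈ gFour m ψ := by
  obtain ⟨A, X, -, rfl⟩ := hM
  obtain ⟨B, Y, -, rfl⟩ := hN
  have hψker : ∀ C D : h, (C : Matrix (Fin n) (Fin n) ℝ) *ᵥ ψ D = 0 := fun C D =>
    mulVec_eq_zero_of_disjoint_support (fun i j hj => hblock _ C.2 i j (Or.inr hj)) (hψsupp D)
  refine ⟨⁅A, B⁆, (A : Matrix (Fin n) (Fin n) ℝ) *ᵥ Y - (B : Matrix (Fin n) (Fin n) ℝ) *ᵥ X,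
    fun i hi => ?_, ?_⟩
  · have hrow : ∀ C : h, ∀ v, ((C : Matrix (Fin n) (Fin n) ℝ) *ᵥ v) i = 0 := fun C =>
      mulVec_apply_eq_zero_of_row_eq_zero fun j => hblock _ C.2 i j (Or.inl hi)
    simp [hrow]
  · rw [toMat_lie 0 0 (transpose_eq_neg_of_mem_son (hh A.2))
      (transpose_eq_neg_of_mem_son (hh B.2)), hψ, LieSubalgebra.coe_bracket]
    simp [mulVec_add, hψker]

lemma gFour_subset_stab (hh : h ≤ son n) :
    (gFour m ψ : Set (Matrix (Idx n) (Idx n) ℝ)) ⊆ stab n := by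
  rintro _ ⟨A, X, -, rfl⟩
  exact toMat_mem_stab 0 (transpose_eq_neg_of_mem_son (hh A.2)) _

end gFour

theorem stmt5_general (n m : ℕ)
    (h : LieSubalgebra ℝ (Matrix (Fin n) (Fin n) ℝ)) (hh : h ≤ son n)
    (hblock : ∀ A ∈ h, ∀ i j : Fin n, m ≤ (i : ℕ) ∨ m ≤ (j : ℕ) → A i j = 0)
    (ψ : h →ₗ[ℝ] (Fin n → ℝ))
    (hψsupp : ∀ (A : h) (i : Fin n), (i : ℕ) < m → ψ A i = 0)
    (hψ : ∀ A B : h, ψ ⁅A, B⁆ = 0) :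
    ∃ L : LieSubalgebra ℝ (Matrix (Idx n) (Idx n) ℝ),
      (L : Set (Matrix (Idx n) (Idx n) ℝ)) =
        {M | ∃ (A : h) (X : Fin n → ℝ), (∀ i : Fin n, m ≤ (i : ℕ) → X i = 0) ∧
          M = toMat 0 (A : Matrix (Fin n) (Fin n) ℝ) (X + ψ A)} ∧
      (L : Set (Matrix (Idx n) (Idx n) ℝ)) ⊆ stab n :=
  ⟨{ gFour m ψ with lie_mem' := lie_mem_gFour hh hblock hψsupp hψ }, rfl, gFour_subset_stab hh⟩

/-- For `0 < m < n`, a subalgebra `h ⊆ so(m) ⊆ so(n)` acting trivially on the last `n-m`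
coordinates, and a linear `ψ : h → ℝ^{n-m}` vanishing on the commutant,
`g^{4,h,m,ψ} = {(0, A, X + ψ(A)) : A ∈ h, X ∈ ℝᵐ}` is a Lie subalgebra of `so(1,n+1)_{ℝp}`. -/
theorem stmt5 (n m : ℕ) (hm0 : 0 < m) (hmn : m < n)
    (h : LieSubalgebra ℝ (Matrix (Fin n) (Fin n) ℝ)) (hh : h ≤ son n)
    (hblock : ∀ A ∈ h, ∀ i j : Fin n, m ≤ (i : ℕ) ∨ m ≤ (j : ℕ) → A i j = 0)
    (ψ : h →ₗ[ℝ] (Fin n → ℝ))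
    (hψsupp : ∀ (A : h) (i : Fin n), (i : ℕ) < m → ψ A i = 0)
    (hψ : ∀ A B : h, ψ ⁅A, B⁆ = 0) :
    ∃ L : LieSubalgebra ℝ (Matrix (Idx n) (Idx n) ℝ),
      (L : Set (Matrix (Idx n) (Idx n) ℝ)) =
        {M | ∃ (A : h) (X : Fin n → ℝ), (∀ i : Fin n, m ≤ (i : ℕ) → X i = 0) ∧
          M = toMat 0 (A : Matrix (Fin n) (Fin n) ℝ) (X + ψ A)} ∧
      (L : Set (Matrix (Idx n) (Idx n) ℝ)) ⊆ stab n :=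
  stmt5_general n m h hh hblock ψ hψsupp hψ
end

section
/- Let P ∈ Hom(ℝⁿ, so(n)) have components P^k_{ji} (P(e_i)e_j = Σ_k P^k_{ji} e_k) satisfying P^j_{ki} = −P^k_{ji} and P^k_{ji} + P^i_{kj} + P^j_{ik} = 0. Define a^k_{ji} = (1/3)(P^k_{ji} + P^k_{ij}). Then a^k_{ji} = a^k_{ij}, P^k_{ji} = a^k_{ji} − a^j_{ki}, and a^k_{ji} + a^i_{kj} + a^j_{ik} = 0. -/
/-- Given components `P^k_{ji}` of a weak-curvature tensor (`P k j i` denotes `P^k_{ji}`),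
the numbers `a^k_{ji} = (1/3)(P^k_{ji} + P^k_{ij})` are symmetric in the lower indices,
satisfy `P^k_{ji} = a^k_{ji} - a^j_{ki}` and the cyclic identity. -/
theorem stmt9 (n : ℕ) (P : Fin n → Fin n → Fin n → ℝ)
    (hskew : ∀ i j k : Fin n, P j k i = -P k j i)
    (hcyc : ∀ i j k : Fin n, P k j i + P i k j + P j i k = 0)
    (a : Fin n → Fin n → Fin n → ℝ)
    (ha : ∀ k j i : Fin n, a k j i = (1 / 3) * (P k j i + P k i j)) :
    ∀ i j k : Fin n,
      a k j i = a k i j ∧ P k j i = a k j i - a j k i ∧ a k j i + a i k j + a j i k = 0 := by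
  intro i j k
  have h1 := hskew i j k
  have h2 := hskew j k i
  have h3 := hskew k i j
  have c1 := hcyc i j k
  have c2 := hcyc j k i
  have c3 := hcyc k i j
  refine ⟨?_, ?_, ?_⟩ <;> rw [ha, ha] <;> try rw [ha]
  · ring
  · linarith
  · linarith
end

section
/- Let g₂ ⊂ so(7) be the span of the 14 matrices A_1 = E_{12}−E_{34}, A_2 = E_{12}−E_{56}, A_3 = E_{13}+E_{24}, A_4 = E_{13}−E_{67}, A_5 = E_{14}−E_{23}, A_6 = E_{14}−E_{57}, A_7 = E_{15}+E_{26}, A_8 = E_{15}+E_{47}, A_9 = E_{16}−E_{25}, A_{10} = E_{16}+E_{37}, A_{11} = E_{17}−E_{36}, A_{12} = E_{17}−E_{45}, A_{13} = E_{27}−E_{35}, A_{14} = E_{27}+E_{46}. Then the linear map P : ℝ⁷ → g₂ given by P(e_1)=A_6, P(e_2)=A_4+A_5, P(e_3)=A_1+A_7, P(e_4)=A_1, P(e_5)=A_4, P(e_6)=−A_5+A_6, P(e_7)=A_7 satisfies the weak-curvature identity ⟨P(u)v,w⟩ + ⟨P(v)w,u⟩ + ⟨P(w)u,v⟩ = 0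 for all u,v,w ∈ ℝ⁷. -/
open Matrix

/-- Elementary skew-symmetric matrix `E_{ij}` (0-indexed: `E i j` corresponds to `E_{(i+1)(j+1)}`). -/
noncomputable def E (n : ℕ) (i j : Fin n) : Matrix (Fin n) (Fin n) ℝ :=
  Matrix.single i j 1 - Matrix.single j i 1

noncomputable def A1 : Matrix (Fin 7) (Fin 7) ℝ := E 7 0 1 - E 7 2 3
noncomputable def A2 : Matrix (Fin 7) (Fin 7) ℝ := E 7 0 1 - E 7 4 5
noncomputable def A3 : Matrix (Fin 7) (Fin 7) ℝ := E 7 0 2 + E 7 1 3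
noncomputable def A4 : Matrix (Fin 7) (Fin 7) ℝ := E 7 0 2 - E 7 5 6
noncomputable def A5 : Matrix (Fin 7) (Fin 7) ℝ := E 7 0 3 - E 7 1 2
noncomputable def A6 : Matrix (Fin 7) (Fin 7) ℝ := E 7 0 3 - E 7 4 6
noncomputable def A7 : Matrix (Fin 7) (Fin 7) ℝ := E 7 0 4 + E 7 1 5
noncomputable def A8 : Matrix (Fin 7) (Fin 7) ℝ := E 7 0 4 + E 7 3 6
noncomputable def A9 : Matrix (Fin 7) (Fin 7) ℝ := E 7 0 5 - E 7 1 4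
noncomputable def A10 : Matrix (Fin 7) (Fin 7) ℝ := E 7 0 5 + E 7 2 6
noncomputable def A11 : Matrix (Fin 7) (Fin 7) ℝ := E 7 0 6 - E 7 2 5
noncomputable def A12 : Matrix (Fin 7) (Fin 7) ℝ := E 7 0 6 - E 7 3 4
noncomputable def A13 : Matrix (Fin 7) (Fin 7) ℝ := E 7 1 6 - E 7 2 4
noncomputable def A14 : Matrix (Fin 7) (Fin 7) ℝ := E 7 1 6 + E 7 3 5

/-- The span of the 14 matrices: `g₂ ⊂ so(7)`. -/
noncomputable def g2span : Submodule ℝ (Matrix (Fin 7) (Fin 7) ℝ) :=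
  Submodule.span ℝ {A1, A2, A3, A4, A5, A6, A7, A8, A9, A10, A11, A12, A13, A14}

/-- Values of the map `P` on the standard basis of `ℝ⁷`. -/
noncomputable def PA : Fin 7 → Matrix (Fin 7) (Fin 7) ℝ :=
  ![A6, A4 + A5, A1 + A7, A1, A4, -A5 + A6, A7]

/-- The linear map `P : ℝ⁷ → g₂`. -/
noncomputable def Pmap (u : Fin 7 → ℝ) : Matrix (Fin 7) (Fin 7) ℝ := ∑ i, u i • PA i

lemma PA_mem_g2span (i : Fin 7) : PA i ∈ g2span := by
  have mem : ∀ {A}, A ∈ ({A1, A2, A3, A4, A5, A6, A7, A8, A9, A10, A11, A12, A13, A14} :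
      Set (Matrix (Fin 7) (Fin 7) ℝ)) → A ∈ g2span := fun hA => Submodule.subset_span hA
  fin_cases i
  · exact mem (A := A6) (by simp)
  · exact add_mem (mem (A := A4) (by simp)) (mem (A := A5) (by simp))
  · exact add_mem (mem (A := A1) (by simp)) (mem (A := A7) (by simp))
  · exact mem (A := A1) (by simp)
  · exact mem (A := A4) (by simp)
  · exact add_mem (neg_mem (mem (A := A5) (by simp))) (mem (A := A6) (by simp))
  · exact mem (A := A7) (by simp)

lemma Pmap_mem_g2span (u : Fin 7 → ℝ) : Pmap u ∈ g2span :=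
  Submodule.sum_mem _ fun i _ => Submodule.smul_mem _ _ (PA_mem_g2span i)

lemma Pmap_eq (u : Fin 7 → ℝ) : Pmap u =
    !![0, u 2 + u 3, u 1 + u 4, u 0 + u 1, u 2 + u 6, 0, 0;
       -(u 2 + u 3), 0, -(u 1) + u 5, 0, 0, u 2 + u 6, 0;
       -(u 1 + u 4), u 1 - u 5, 0, -(u 2 + u 3), 0, 0, 0;
       -(u 0 + u 1), 0, u 2 + u 3, 0, 0, 0, 0;
       -(u 2 + u 6), 0, 0, 0, 0, 0, -(u 0 + u 5);
       0, -(u 2 + u 6), 0, 0, 0, 0, -(u 1 + u 4);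
       0, 0, 0, 0, u 0 + u 5, u 1 + u 4, 0] := by
  ext i j
  fin_cases i <;> fin_cases j <;> simp [Pmap, PA, Fin.sum_univ_seven, A1, A4, A5, A6, A7, E] <;> ring

lemma Pmap_weak_curvature (u v w : Fin 7 → ℝ) :
    (Pmap u *ᵥ v) ⬝ᵥ w + (Pmap v *ᵥ w) ⬝ᵥ u + (Pmap w *ᵥ u) ⬝ᵥ v = 0 := by
  simp only [Pmap_eq, mulVec, dotProduct, Fin.sum_univ_seven, of_apply, cons_val', cons_val_fin_one,
    cons_val_zero, cons_val_one, cons_val]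
  ring

/-- `P` takes values in `g₂` and satisfies the weak-curvature identity. -/
theorem stmt13 :
    (∀ u : Fin 7 → ℝ, Pmap u ∈ g2span) ∧
    ∀ u v w : Fin 7 → ℝ,
      ((Pmap u).mulVec v) ⬝ᵥ w + ((Pmap v).mulVec w) ⬝ᵥ u + ((Pmap w).mulVec u) ⬝ᵥ v = 0 :=
  ⟨Pmap_mem_g2span, Pmap_weak_curvature⟩
end

section
/- Let h ⊆ so(n) be a subalgebra, h_i ⊆ so(n_i) irreducible ideals of h with ℝⁿ = ℝ^{n_1} ⊕ ... ⊕ ℝ^{n_s} ⊕ ℝ^{n_{s+1}} an orthogonal decomposition such that h = h_1 ⊕ ... ⊕ h_s, h annihilates ℝ^{n_{s+1}}, and h_i(ℝ^{n_j}) = 0 for i ≠ j. Then every weak-curvature tensor P ∈ P(h) decomposes as P = P_1 + ... + P_s with P_i ∈ P(h_i) (each P_i vanishing on the summands other than ℝ^{n_i} and taking values in h_i), i.e., P(h) = P(h_1) ⊕ ... ⊕ P(h_s). -/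
open Matrix

attribute [local instance 100] LieRing.ofAssociativeRing

/-- The space `P(h)` of weak-curvature tensors of type `h ⊆ so(n)`. -/
noncomputable def Pset (n : ℕ) (h : LieSubalgebra ℝ (Matrix (Fin n) (Fin n) ℝ)) :
    Set ((Fin n → ℝ) →ₗ[ℝ] Matrix (Fin n) (Fin n) ℝ) :=
  {P | (∀ u : Fin n → ℝ, P u ∈ h) ∧
    ∀ u v w : Fin n → ℝ,
      ((P u).mulVec v) ⬝ᵥ w + ((P v).mulVec w) ⬝ᵥ u + ((P w).mulVec u) ⬝ᵥ v = 0}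

/-!
Elements of `h_i` are skew-symmetric and kill every `V_j` with `j ≠ i`, so their images are
orthogonal to those `V_j`, i.e. they take values in `V_i`; consequently `h` preserves each `V_i`.
Two terms of the Bianchi identity then vanish by orthogonality, which shows that `P` kills the
summand annihilated by `h`, and that for `v ∈ V_i` the `h_j`-component `B` of `P v` (`j ≠ i`)
satisfies `|B w|² = ⟨P(v) w, B w⟩ = 0` for `w ∈ V_j`, so `B = 0` and `P(V_i) ⊆ h_i`. The
components `P_i = P ∘ π_i`, with `π_i` the projection onto `V_i`, are then weak-curvature tensors
of type `h_i`, and they are unique because the decomposition `h = h_1 ⊕ ⋯ ⊕ h_s` is.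
-/

theorem Matrix.mulVec_dotProduct_of_transpose_eq_neg {R m : Type*} [CommRing R] [Fintype m]
    {A : Matrix m m R} (hA : Aᵀ = -A) (x y : m → R) : A *ᵥ x ⬝ᵥ y = -(x ⬝ᵥ A *ᵥ y) := by
  rw [← vecMul_transpose, ← dotProduct_mulVec, hA, neg_mulVec, dotProduct_neg]

theorem mem_son {n : ℕ} (A : Matrix (Fin n) (Fin n) ℝ) : A ∈ son n ↔ Aᵀ = -A :=
  LieAlgebra.Orthogonal.mem_so _ _ A

namespace DirectSum.IsInternal

section

variable {R M ι : Type*} [Semiring R] [AddCommMonoid M] [Module R M] [DecidableEq ι]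
  {V : ι → Submodule R M}

noncomputable def proj (hV : IsInternal V) (j : ι) : M →ₗ[R] M :=
  (V j).subtype ∘ₗ component R ι (fun j => V j) j ∘ₗ
    (LinearEquiv.ofBijective (coeLinearMap V) hV).symm.toLinearMap

variable (hV : IsInternal V)

theorem proj_apply (j : ι) (x : M) :
    hV.proj j x = (LinearEquiv.ofBijective (coeLinearMap V) hV).symm x j :=
  rfl

theorem proj_mem (j : ι) (x : M) : hV.proj j x ∈ V j :=
  Submodule.coe_mem _

theorem proj_of_mem_of_ne {j k : ι} {x : M} (hx : x ∈ V k) (hjk : j ≠ k) : hV.proj j x = 0 := by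
  rw [proj_apply, hV.ofBijective_coeLinearMap_of_mem_ne hjk.symm hx, Submodule.coe_zero]

theorem sum_proj [Fintype ι] (x : M) : ∑ j, hV.proj j x = x := by
  set e := LinearEquiv.ofBijective (coeLinearMap V) hV
  calc ∑ j, hV.proj j x = coeLinearMap V (∑ j, of (fun j => V j) j (e.symm x j)) := by
        simp only [map_sum, coeLinearMap_of, proj_apply, e]
    _ = x := by rw [sum_univ_of]; exact e.apply_symm_apply x

theorem sum_comp_proj [Fintype ι] {N : Type*} [AddCommMonoid N] [Module R N] (f : M →ₗ[R] N) :
    ∑ j, f ∘ₗ hV.proj j = f := by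
  ext x
  simp [← map_sum, hV.sum_proj]

end

section

variable {R m n ι : Type*} [CommSemiring R] [Fintype m] [Fintype ι] [DecidableEq ι]
  {V : ι → Submodule R (m → R)}

theorem mulVec_proj (hV : IsInternal V) {A : Matrix n m R} {k : ι}
    (hA : ∀ j ≠ k, ∀ v ∈ V j, A *ᵥ v = 0) (x : m → R) : A *ᵥ hV.proj k x = A *ᵥ x := by
  conv_rhs => rw [← hV.sum_proj x, mulVec_sum]
  exact (Fintype.sum_eq_single k fun j hj => hA j hj _ (hV.proj_mem j x)).symm

theorem matrix_eq_zero_of_forall_mulVec_eq_zero (hV : IsInternal V) {A : Matrix n m R}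
    (hA : ∀ j, ∀ v ∈ V j, A *ᵥ v = 0) : A = 0 := by
  refine ext_iff_mulVec.2 fun x => ?_
  rw [← hV.sum_proj x, mulVec_sum, zero_mulVec]
  exact Finset.sum_eq_zero fun j _ => hA j _ (hV.proj_mem j x)

end

variable {m ι : Type*} [Fintype m] [Fintype ι] [DecidableEq ι] {V : ι → Submodule ℝ (m → ℝ)}

theorem dotProduct_proj_of_mem (hV : IsInternal V)
    (hVorth : Pairwise fun i j => ∀ u ∈ V i, ∀ v ∈ V j, u ⬝ᵥ v = 0) {k : ι} {y : m → ℝ}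
    (hy : y ∈ V k) (x : m → ℝ) : y ⬝ᵥ hV.proj k x = y ⬝ᵥ x := by
  conv_rhs => rw [← hV.sum_proj x, dotProduct_sum]
  exact (Fintype.sum_eq_single k fun j hj => hVorth hj.symm y hy _ (hV.proj_mem j x)).symm

theorem mem_of_forall_dotProduct_eq_zero (hV : IsInternal V)
    (hVorth : Pairwise fun i j => ∀ u ∈ V i, ∀ v ∈ V j, u ⬝ᵥ v = 0) {k : ι} {y : m → ℝ}
    (hy : ∀ j ≠ k, ∀ c ∈ V j, y ⬝ᵥ c = 0) : y ∈ V k := by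
  have hproj : ∀ j ≠ k, hV.proj j y = 0 := fun j hj => by
    rw [← dotProduct_self_eq_zero, hV.dotProduct_proj_of_mem hVorth (hV.proj_mem j y),
      dotProduct_comm, hy j hj _ (hV.proj_mem j y)]
  rw [← hV.sum_proj y, Fintype.sum_eq_single k hproj]
  exact hV.proj_mem k y

theorem mulVec_mem_of_transpose_eq_neg (hV : IsInternal V)
    (hVorth : Pairwise fun i j => ∀ u ∈ V i, ∀ v ∈ V j, u ⬝ᵥ v = 0) {A : Matrix m m ℝ}
    (hA : Aᵀ = -A) {k : ι} (hAk : ∀ j ≠ k, ∀ v ∈ V j, A *ᵥ v = 0) (x : m → ℝ) : A *ᵥ x ∈ V k :=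
  hV.mem_of_forall_dotProduct_eq_zero hVorth fun j hj c hc => by
    rw [mulVec_dotProduct_of_transpose_eq_neg hA, hAk j hj c hc, dotProduct_zero, neg_zero]

end DirectSum.IsInternal

theorem sum_mulVec_eq_of_mem_castSucc {n s : ℕ} {V : Fin (s + 1) → Submodule ℝ (Fin n → ℝ)}
    {hi : Fin s → LieSubalgebra ℝ (Matrix (Fin n) (Fin n) ℝ)}
    (hzero : ∀ (i : Fin s) (j : Fin (s + 1)), j ≠ i.castSucc →
      ∀ A ∈ hi i, ∀ v ∈ V j, A *ᵥ v = 0)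
    {f : Fin s → Matrix (Fin n) (Fin n) ℝ} (hf : ∀ i, f i ∈ hi i) {k : Fin s} {v : Fin n → ℝ}
    (hv : v ∈ V k.castSucc) : (∑ i, f i) *ᵥ v = f k *ᵥ v := by
  rw [sum_mulVec]
  exact Fintype.sum_eq_single k fun i hik =>
    hzero i _ ((Fin.castSucc_injective s).ne hik.symm) _ (hf i) v hv

namespace Pset

variable {n : ℕ} {h : LieSubalgebra ℝ (Matrix (Fin n) (Fin n) ℝ)}
  {P : (Fin n → ℝ) →ₗ[ℝ] Matrix (Fin n) (Fin n) ℝ}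

theorem apply_eq_zero_of_forall_mulVec_eq_zero (hh : h ≤ son n) (hP : P ∈ Pset n h)
    {v : Fin n → ℝ} (hv : ∀ A ∈ h, A *ᵥ v = 0) : P v = 0 := by
  have hterm : ∀ w u, P w *ᵥ u ⬝ᵥ v = 0 := fun w u => by
    rw [mulVec_dotProduct_of_transpose_eq_neg ((mem_son _).1 (hh (hP.1 w))), hv _ (hP.1 w),
      dotProduct_zero, neg_zero]
  refine ext_iff_mulVec.2 fun w => ?_
  rw [zero_mulVec, ← dotProduct_self_eq_zero]
  have hbianchi := hP.2 (P v *ᵥ w) v w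
  rwa [hv _ (hP.1 _), zero_dotProduct, zero_add, hterm, add_zero] at hbianchi

theorem mulVec_dotProduct_eq_zero (hP : P ∈ Pset n h) {W₁ W₂ : Submodule ℝ (Fin n → ℝ)}
    (horth : ∀ x ∈ W₁, ∀ y ∈ W₂, x ⬝ᵥ y = 0)
    (h₁ : ∀ A ∈ h, ∀ v ∈ W₁, A *ᵥ v ∈ W₁) (h₂ : ∀ A ∈ h, ∀ v ∈ W₂, A *ᵥ v ∈ W₂)
    {v w u : Fin n → ℝ} (hv : v ∈ W₁) (hw : w ∈ W₂) (hu : u ∈ W₂) : P v *ᵥ w ⬝ᵥ u = 0 := by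
  have huv := horth _ (h₁ _ (hP.1 u) v hv) w hw
  have hwu := horth v hv _ (h₂ _ (hP.1 w) u hu)
  rw [dotProduct_comm] at hwu
  simpa [huv, hwu] using hP.2 u v w

theorem comp_proj_mem {ι : Type*} [Fintype ι] [DecidableEq ι] {V : ι → Submodule ℝ (Fin n → ℝ)}
    (hV : DirectSum.IsInternal V) (hVorth : Pairwise fun i j => ∀ u ∈ V i, ∀ v ∈ V j, u ⬝ᵥ v = 0)
    (hP : P ∈ Pset n h) {h' : LieSubalgebra ℝ (Matrix (Fin n) (Fin n) ℝ)} {k : ι}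
    (hker : ∀ B ∈ h', ∀ j ≠ k, ∀ v ∈ V j, B *ᵥ v = 0) (hrange : ∀ B ∈ h', ∀ x, B *ᵥ x ∈ V k)
    (hPk : ∀ v ∈ V k, P v ∈ h') : P ∘ₗ hV.proj k ∈ Pset n h' := by
  have hterm : ∀ a b c, P (hV.proj k a) *ᵥ b ⬝ᵥ c =
      P (hV.proj k a) *ᵥ hV.proj k b ⬝ᵥ hV.proj k c := fun a b c => by
    have hA := hPk _ (hV.proj_mem k a)
    rw [hV.mulVec_proj (hker _ hA), hV.dotProduct_proj_of_mem hVorth (hrange _ hA b)]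
  refine ⟨fun u => hPk _ (hV.proj_mem k u), fun u v w => ?_⟩
  simp only [LinearMap.comp_apply]
  rw [hterm u v w, hterm v w u, hterm w u v]
  exact hP.2 _ _ _

theorem apply_mem_of_mem_castSucc {s : ℕ} {V : Fin (s + 1) → Submodule ℝ (Fin n → ℝ)}
    {hi : Fin s → LieSubalgebra ℝ (Matrix (Fin n) (Fin n) ℝ)} (hV : DirectSum.IsInternal V)
    (hVorth : Pairwise fun i j => ∀ u ∈ V i, ∀ v ∈ V j, u ⬝ᵥ v = 0)
    (hdirect : ∀ A ∈ h, ∃ f : Fin s → Matrix (Fin n) (Fin n) ℝ, (∀ i, f i ∈ hi i) ∧ A = ∑ i, f i)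
    (hzero : ∀ (i : Fin s) (j : Fin (s + 1)), j ≠ i.castSucc →
      ∀ A ∈ hi i, ∀ v ∈ V j, A *ᵥ v = 0)
    (hrange : ∀ i, ∀ B ∈ hi i, ∀ x, B *ᵥ x ∈ V i.castSucc)
    (hpres : ∀ A ∈ h, ∀ k : Fin s, ∀ v ∈ V k.castSucc, A *ᵥ v ∈ V k.castSucc)
    (hP : P ∈ Pset n h) {k : Fin s} {v : Fin n → ℝ} (hv : v ∈ V k.castSucc) : P v ∈ hi k := by
  obtain ⟨f, hf, hPv⟩ := hdirect (P v) (hP.1 v)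
  have hfi : ∀ i ≠ k, f i = 0 := fun i hik => by
    refine hV.matrix_eq_zero_of_forall_mulVec_eq_zero fun j w hw => ?_
    obtain rfl | hj := eq_or_ne j i.castSucc
    · have hPw : P v *ᵥ w = f i *ᵥ w := by rw [hPv, sum_mulVec_eq_of_mem_castSucc hzero hf hw]
      rw [← dotProduct_self_eq_zero, ← hPw]
      exact mulVec_dotProduct_eq_zero hP (hVorth ((Fin.castSucc_injective s).ne hik.symm))
        (hpres · · k) (hpres · · i) hv hw (hPw ▸ hrange i _ (hf i) w)
    · exact hzero i j hj _ (hf i) w hw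
  rw [hPv, Fintype.sum_eq_single k hfi]
  exact hf k

end Pset

theorem stmt17_general (n s : ℕ)
    (h : LieSubalgebra ℝ (Matrix (Fin n) (Fin n) ℝ)) (hh : h ≤ son n)
    (V : Fin (s + 1) → Submodule ℝ (Fin n → ℝ))
    (hi : Fin s → LieSubalgebra ℝ (Matrix (Fin n) (Fin n) ℝ))
    -- the `V j` form an orthogonal direct sum decomposition of `ℝⁿ`
    (hVorth : ∀ i j : Fin (s + 1), i ≠ j → ∀ u ∈ V i, ∀ v ∈ V j, u ⬝ᵥ v = 0)
    (hVsum : DirectSum.IsInternal V)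
    -- `h` is the direct sum of the ideals `h_i`
    (hisub : ∀ i : Fin s, hi i ≤ h)
    (hdirect : ∀ A ∈ h, ∃! f : Fin s → Matrix (Fin n) (Fin n) ℝ,
      (∀ i : Fin s, f i ∈ hi i) ∧ A = ∑ i, f i)
    -- `h` annihilates the last summand
    (hann : ∀ A ∈ h, ∀ v ∈ V (Fin.last s), A.mulVec v = 0)
    -- `h_i` annihilates `V j` for `j ≠ i`
    (hzero : ∀ (i : Fin s) (j : Fin (s + 1)), j ≠ i.castSucc →
      ∀ A ∈ hi i, ∀ v ∈ V j, A.mulVec v = 0) :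
    ∀ P ∈ Pset n h, ∃! Q : Fin s → ((Fin n → ℝ) →ₗ[ℝ] Matrix (Fin n) (Fin n) ℝ),
      (∀ i : Fin s, Q i ∈ Pset n (hi i)) ∧
      (∀ (i : Fin s) (j : Fin (s + 1)), j ≠ i.castSucc → ∀ v ∈ V j, Q i v = 0) ∧
      P = ∑ i, Q i := by
  intro P hP
  have hrange : ∀ i, ∀ B ∈ hi i, ∀ x, B *ᵥ x ∈ V i.castSucc := fun i B hB =>
    hVsum.mulVec_mem_of_transpose_eq_neg hVorth ((mem_son B).1 (hh (hisub i hB)))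
      fun j hj => hzero i j hj B hB
  have hpres : ∀ A ∈ h, ∀ k : Fin s, ∀ v ∈ V k.castSucc, A *ᵥ v ∈ V k.castSucc := by
    intro A hA k v hv
    obtain ⟨f, hf, rfl⟩ := (hdirect A hA).exists
    rw [sum_mulVec_eq_of_mem_castSucc hzero hf hv]
    exact hrange k _ (hf k) v
  have hPi : ∀ k : Fin s, ∀ v ∈ V k.castSucc, P v ∈ hi k := fun k v hv =>
    Pset.apply_mem_of_mem_castSucc hVsum hVorth (fun A hA => (hdirect A hA).exists) hzero hrange
      hpres hP hv
  set Q := fun i : Fin s => P ∘ₗ hVsum.proj i.castSucc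
  have hlast : P ∘ₗ hVsum.proj (Fin.last s) = 0 := LinearMap.ext fun u =>
    Pset.apply_eq_zero_of_forall_mulVec_eq_zero hh hP fun A hA =>
      hann A hA _ (hVsum.proj_mem _ u)
  have hsum : P = ∑ i, Q i := by
    conv_lhs => rw [← hVsum.sum_comp_proj P, Fin.sum_univ_castSucc, hlast, add_zero]
  refine ⟨Q, ⟨fun i => Pset.comp_proj_mem hVsum hVorth hP (fun B hB j hj => hzero i j hj B hB)
    (hrange i) (hPi i), fun i j hj v hv => ?_, hsum⟩, fun Q' ⟨hQ', _, hsum'⟩ => ?_⟩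
  · simp [Q, hVsum.proj_of_mem_of_ne hv hj.symm]
  · refine funext fun i => LinearMap.ext fun u => congrFun ((hdirect (P u) (hP.1 u)).unique
      ⟨fun i => (hQ' i).1 u, ?_⟩ ⟨fun i => hPi i _ (hVsum.proj_mem _ u), ?_⟩) i
    · exact (LinearMap.congr_fun hsum' u).trans (LinearMap.sum_apply _ _ _)
    · exact (LinearMap.congr_fun hsum u).trans (LinearMap.sum_apply _ _ _)

/-- Borel–Lichnerowicz decomposition of the space of weak-curvature tensors:
given the orthogonal decomposition `ℝⁿ = ℝ^{n_1} ⊕ ⋯ ⊕ ℝ^{n_s} ⊕ ℝ^{n_{s+1}}` (the subspaces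
`V 0, …, V s`, the last being annihilated by `h`) and the decomposition `h = h_1 ⊕ ⋯ ⊕ h_s` into
ideals with `h_i` irreducible on `ℝ^{n_i}` and `h_i(ℝ^{n_j}) = 0` for `i ≠ j`, every
`P ∈ P(h)` decomposes uniquely as `P = P_1 + ⋯ + P_s` with `P_i ∈ P(h_i)`, i.e.
`P(h) = P(h_1) ⊕ ⋯ ⊕ P(h_s)`. -/
theorem stmt17 (n s : ℕ)
    (h : LieSubalgebra ℝ (Matrix (Fin n) (Fin n) ℝ)) (hh : h ≤ son n)
    (V : Fin (s + 1) → Submodule ℝ (Fin n → ℝ))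
    (hi : Fin s → LieSubalgebra ℝ (Matrix (Fin n) (Fin n) ℝ))
    -- the `V j` form an orthogonal direct sum decomposition of `ℝⁿ`
    (hVorth : ∀ i j : Fin (s + 1), i ≠ j → ∀ u ∈ V i, ∀ v ∈ V j, u ⬝ᵥ v = 0)
    (hVsum : DirectSum.IsInternal V)
    -- `h` is the direct sum of the ideals `h_i`
    (hisub : ∀ i : Fin s, hi i ≤ h)
    (hideal : ∀ i : Fin s, ∀ A ∈ h, ∀ B ∈ hi i, ⁅A, B⁆ ∈ hi i)
    (hdirect : ∀ A ∈ h, ∃! f : Fin s → Matrix (Fin n) (Fin n) ℝ,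
      (∀ i : Fin s, f i ∈ hi i) ∧ A = ∑ i, f i)
    -- `h` annihilates the last summand
    (hann : ∀ A ∈ h, ∀ v ∈ V (Fin.last s), A.mulVec v = 0)
    -- `h_i` annihilates `V j` for `j ≠ i`
    (hzero : ∀ (i : Fin s) (j : Fin (s + 1)), j ≠ i.castSucc →
      ∀ A ∈ hi i, ∀ v ∈ V j, A.mulVec v = 0)
    -- `h_i ⊆ so(n_i)` is irreducible
    (hirr : ∀ i : Fin s, ∀ W : Submodule ℝ (Fin n → ℝ), W ≤ V i.castSucc →
      (∀ A ∈ hi i, ∀ w ∈ W, A.mulVec w ∈ W) → W = ⊥ ∨ W = V i.castSucc) :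
    ∀ P ∈ Pset n h, ∃! Q : Fin s → ((Fin n → ℝ) →ₗ[ℝ] Matrix (Fin n) (Fin n) ℝ),
      (∀ i : Fin s, Q i ∈ Pset n (hi i)) ∧
      (∀ (i : Fin s) (j : Fin (s + 1)), j ≠ i.castSucc → ∀ v ∈ V j, Q i v = 0) ∧
      P = ∑ i, Q i :=
  stmt17_general n s h hh V hi hVorth hVsum hisub hdirect hann hzero
end

section
/- Every weak-curvature tensor P ∈ P(h) for h ⊆ so(n) vanishes on the subspace annihilated by h: if h·v = 0 for the vector v (i.e., Av = 0 for all A ∈ h), and additionally v is orthogonal to the span of the images of all elements of h, then P(v) = 0. In particular, with the decomposition ℝⁿ = ℝ^{n_0} ⊕ ℝ^{n_{s+1}} where h annihilates ℝ^{n_{s+1}} and h ⊆ so(n_0), every P ∈ P(h) satisfies P|_{ℝ^{n_{s+1}}} = 0. -/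
open Matrix

attribute [local instance 100] LieRing.ofAssociativeRing

theorem Pset.mulVec_dotProduct_eq_zero_s18 {n : ℕ} {h : LieSubalgebra ℝ (Matrix (Fin n) (Fin n) ℝ)}
    {P : (Fin n → ℝ) →ₗ[ℝ] Matrix (Fin n) (Fin n) ℝ} (hP : P ∈ Pset n h) {v : Fin n → ℝ}
    (hv1 : ∀ A ∈ h, A.mulVec v = 0)
    (hv2 : ∀ A ∈ h, ∀ u : Fin n → ℝ, (A.mulVec u) ⬝ᵥ v = 0) (w u : Fin n → ℝ) :
    (P v).mulVec w ⬝ᵥ u = 0 := by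
  obtain ⟨hmem, hcyclic⟩ := hP
  simpa only [hv1 (P u) (hmem u), hv2 (P w) (hmem w) u, zero_dotProduct, zero_add, add_zero]
    using hcyclic u v w

theorem stmt18_general (n : ℕ) (h : LieSubalgebra ℝ (Matrix (Fin n) (Fin n) ℝ))
    (P : (Fin n → ℝ) →ₗ[ℝ] Matrix (Fin n) (Fin n) ℝ) (hP : P ∈ Pset n h)
    (v : Fin n → ℝ)
    (hv1 : ∀ A ∈ h, A.mulVec v = 0)
    (hv2 : ∀ A ∈ h, ∀ u : Fin n → ℝ, (A.mulVec u) ⬝ᵥ v = 0) :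
    P v = 0 := by
  refine ext_iff_mulVec.mpr fun w => ?_
  rw [zero_mulVec]
  exact dotProduct_eq_zero _ (Pset.mulVec_dotProduct_eq_zero_s18 hP hv1 hv2 w)

/-- A weak-curvature tensor `P ∈ P(h)` vanishes on any vector `v` annihilated by `h` and
orthogonal to the images of all elements of `h`. In particular `P` vanishes on the subspace
`ℝ^{n_{s+1}}` annihilated by `h`. -/
theorem stmt18 (n : ℕ) (h : LieSubalgebra ℝ (Matrix (Fin n) (Fin n) ℝ)) (hh : h ≤ son n)
    (P : (Fin n → ℝ) →ₗ[ℝ] Matrix (Fin n) (Fin n) ℝ) (hP : P ∈ Pset n h)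
    (v : Fin n → ℝ)
    (hv1 : ∀ A ∈ h, A.mulVec v = 0)
    (hv2 : ∀ A ∈ h, ∀ u : Fin n → ℝ, (A.mulVec u) ⬝ᵥ v = 0) :
    P v = 0 :=
  stmt18_general n h P hP v hv1 hv2
end
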